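/- Let (X, M, μ) be a measure space with inf{μ(E) : μ(E) > 0} > 0. Then every f ∈ L^1(μ) defines a continuous linear functional T on C₀ by T(g) = ∫ f·g dμ, and ‖T‖ = ‖f‖_1. -/

import Mathlib

open MeasureTheory ENNReal

/-- The set `C₀` of essentially bounded functions vanishing at infinity
relative to `μ`. -/
def C0set {X : Type*} [MeasurableSpace X] (μ : Measure X) : Set (Lp ℝ ∞ μ) :=
  {f : Lp ℝ ∞ μ | ∀ ε : ℝ, 0 < ε → ∃ E : Set X, MeasurableSet E ∧ μ E < ∞ ∧
    eLpNorm ((Eᶜ).indicator (⇑f)) ∞ μ < ENNReal.ofReal ε}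

/-!
The functional is the restriction to `C₀` of the Hölder pairing of `L¹` with `L^∞`, so
`‖T‖ ≤ ‖f‖₁`. Conversely, for a measurable set `E` of finite measure, the sign of `f` cut off
outside `E` is an element of `C₀` of norm at most one on which `T` takes the value `∫_E |f|`.
Exhausting `{f ≠ 0}` by the finite-measure sets `{|f| ≥ 1/(n+1)}` gives `‖f‖₁ ≤ ‖T‖`.
-/

section C0Duality

variable {X : Type*} [MeasurableSpace X] {μ : Measure X}

theorem norm_lpPairing_mul_apply_le (f : Lp ℝ 1 μ) (g : Lp ℝ ∞ μ) :
    ‖(ContinuousLinearMap.mul ℝ ℝ).lpPairing μ 1 ∞ f g‖ ≤ ‖f‖ * ‖g‖ := by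
  have hB := (ContinuousLinearMap.mul ℝ ℝ).norm_holder_apply_apply_le (r := 1) f g
  rw [ContinuousLinearMap.opNorm_mul, one_mul] at hB
  change ‖L1.integralCLM' ℝ _‖ ≤ _
  rw [← L1.integral_eq']
  exact (L1.norm_integral_le _).trans hB

theorem mem_C0set_of_ae_eq_zero_on_compl {g : Lp ℝ ∞ μ} {E : Set X} (hE : MeasurableSet E)
    (hμE : μ E < ∞) (hg : ∀ᵐ x ∂μ, x ∉ E → g x = 0) : g ∈ C0set μ := by
  intro ε hε
  refine ⟨E, hE, hμE, ?_⟩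
  have hzero : Eᶜ.indicator g =ᵐ[μ] 0 := by
    filter_upwards [hg] with x hx
    by_cases hxE : x ∈ E <;> simp [hxE, hx]
  rw [eLpNorm_congr_ae hzero, eLpNorm_zero]
  exact ENNReal.ofReal_pos.mpr hε

variable {f : X → ℝ} {C : ℝ}

theorem setIntegral_abs_le_of_forall_C0set
    (hC : ∀ g ∈ C0set μ, ‖g‖ ≤ 1 → ∫ x, f x * g x ∂μ ≤ C) (hfm : Measurable f) {E : Set X}
    (hE : MeasurableSet E) (hμE : μ E < ∞) : ∫ x in E, |f x| ∂μ ≤ C := by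
  set s : X → ℝ := E.indicator fun x => if 0 ≤ f x then 1 else -1
  have hs_le : ∀ x, ‖s x‖ ≤ 1 := fun x => by
    by_cases hx : x ∈ E <;> by_cases h : 0 ≤ f x <;> simp [s, hx, h]
  have hsm : Measurable s :=
    (Measurable.ite (measurableSet_le measurable_const hfm) measurable_const
      measurable_const).indicator hE
  have hs : MemLp s ∞ μ := memLp_top_of_bound hsm.aestronglyMeasurable 1 (.of_forall hs_le)
  have hmem : hs.toLp s ∈ C0set μ := by
    refine mem_C0set_of_ae_eq_zero_on_compl hE hμE ?_
    filter_upwards [hs.coeFn_toLp] with x hx hxE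
    simp [hx, s, hxE]
  have hnorm : ‖hs.toLp s‖ ≤ 1 := by
    rw [Lp.norm_toLp]
    refine toReal_le_of_le_ofReal zero_le_one ?_
    simpa using eLpNorm_le_of_ae_bound (p := ∞) (μ := μ) (.of_forall hs_le)
  calc ∫ x in E, |f x| ∂μ = ∫ x, f x * hs.toLp s x ∂μ := by
        rw [← integral_indicator hE]
        refine integral_congr_ae ?_
        filter_upwards [hs.coeFn_toLp] with x hx
        by_cases hxE : x ∈ E <;> by_cases h : 0 ≤ f x <;>
          simp [hx, s, hxE, h, abs_of_nonneg, abs_of_neg (not_le.1 h)]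
    _ ≤ C := hC _ hmem hnorm

theorem integral_abs_le_of_forall_C0set_of_measurable
    (hC : ∀ g ∈ C0set μ, ‖g‖ ≤ 1 → ∫ x, f x * g x ∂μ ≤ C) (hfm : Measurable f)
    (hf : Integrable f μ) : ∫ x, |f x| ∂μ ≤ C := by
  set E : ℕ → Set X := fun n => {x | ((n : ℝ) + 1)⁻¹ ≤ |f x|}
  have hE : ∀ n, MeasurableSet (E n) := fun n => measurableSet_le measurable_const hfm.abs
  have hμE : ∀ n, μ (E n) < ∞ := fun n => hf.measure_norm_ge_lt_top (by positivity)
  have hmono : Monotone E := fun m n hmn x (hx : ((m : ℝ) + 1)⁻¹ ≤ |f x|) =>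
    show ((n : ℝ) + 1)⁻¹ ≤ |f x| from le_trans (by gcongr) hx
  have hunion : ∫ x in ⋃ n, E n, |f x| ∂μ = ∫ x, |f x| ∂μ := by
    refine setIntegral_eq_integral_of_forall_compl_eq_zero fun x hx => ?_
    by_contra hfx
    have hpos : 0 < |f x| := (abs_nonneg _).lt_of_ne' hfx
    obtain ⟨n, hn⟩ := exists_nat_gt (|f x|⁻¹)
    refine hx (Set.mem_iUnion.2 ⟨n, ?_⟩)
    exact (inv_le_comm₀ (by positivity) hpos).2 (by linarith)
  have hlim := tendsto_setIntegral_of_monotone hE hmono hf.abs.integrableOn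
  rw [hunion] at hlim
  exact le_of_tendsto' hlim fun n => setIntegral_abs_le_of_forall_C0set hC hfm (hE n) (hμE n)

theorem integral_abs_le_of_forall_C0set
    (hC : ∀ g ∈ C0set μ, ‖g‖ ≤ 1 → ∫ x, f x * g x ∂μ ≤ C) (hf : Integrable f μ) :
    ∫ x, |f x| ∂μ ≤ C := by
  obtain ⟨f', hf'm, hff'⟩ := hf.aemeasurable
  have hC' : ∀ g ∈ C0set μ, ‖g‖ ≤ 1 → ∫ x, f' x * g x ∂μ ≤ C := fun g hg hg1 => by
    refine le_of_eq_of_le (integral_congr_ae ?_) (hC g hg hg1)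
    filter_upwards [hff'] with x hx
    rw [hx]
  have habs : ∫ x, |f x| ∂μ = ∫ x, |f' x| ∂μ := integral_congr_ae <| by
    filter_upwards [hff'] with x hx
    rw [hx]
  rw [habs]
  exact integral_abs_le_of_forall_C0set_of_measurable hC' hf'm (hf.congr hff')

end C0Duality

theorem stmt_17_general {X : Type*} [MeasurableSpace X] (μ : Measure X)
    (S : Submodule ℝ (Lp ℝ ∞ μ)) (hS : (S : Set (Lp ℝ ∞ μ)) = C0set μ)
    (f : X → ℝ) (hf : MemLp f 1 μ) :
    ∃ T : S →L[ℝ] ℝ,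
      (∀ g : S, T g = ∫ x, f x * (g : Lp ℝ ∞ μ) x ∂μ) ∧
      ‖T‖ = ∫ x, |f x| ∂μ := by
  let T : S →L[ℝ] ℝ :=
    ((ContinuousLinearMap.mul ℝ ℝ).lpPairing μ 1 ∞ (hf.toLp f)).comp S.subtypeL
  have hT : ∀ g : S, T g = ∫ x, f x * (g : Lp ℝ ∞ μ) x ∂μ := fun g => by
    simp only [T, ContinuousLinearMap.comp_apply, Submodule.subtypeL_apply,
      ContinuousLinearMap.lpPairing_eq_integral, ContinuousLinearMap.mul_apply']
    refine integral_congr_ae ?_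
    filter_upwards [hf.coeFn_toLp] with x hx
    rw [hx]
  have hf1 : Integrable f μ := memLp_one_iff_integrable.1 hf
  have hnorm : ‖hf.toLp f‖ = ∫ x, |f x| ∂μ := L1.norm_of_fun_eq_integral_norm hf1
  refine ⟨T, hT, le_antisymm ?_ ?_⟩
  · refine T.opNorm_le_bound (integral_nonneg fun _ => abs_nonneg _) fun g => ?_
    rw [← hnorm]
    exact norm_lpPairing_mul_apply_le _ _
  · refine integral_abs_le_of_forall_C0set (fun g hg hg1 => ?_) hf1
    have hgS : g ∈ S := by rwa [← SetLike.mem_coe, hS]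
    calc ∫ x, f x * g x ∂μ = T ⟨g, hgS⟩ := (hT ⟨g, hgS⟩).symm
      _ ≤ ‖T‖ * 1 := (le_abs_self _).trans (T.le_opNorm_of_le hg1)
      _ = ‖T‖ := mul_one _

theorem stmt_17 {X : Type*} [MeasurableSpace X] (μ : Measure X)
    (hinf : 0 < sInf (μ '' {E : Set X | MeasurableSet E ∧ 0 < μ E}))
    (S : Submodule ℝ (Lp ℝ ∞ μ)) (hS : (S : Set (Lp ℝ ∞ μ)) = C0set μ)
    (f : X → ℝ) (hf : MemLp f 1 μ) :
    ∃ T : S →L[ℝ] ℝ,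
      (∀ g : S, T g = ∫ x, f x * (g : Lp ℝ ∞ μ) x ∂μ) ∧
      ‖T‖ = ∫ x, |f x| ∂μ :=
  stmt_17_general μ S hS f hf
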